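/- Let G be a graph of maximum degree r ≥ 3 whose nodes carry i.i.d. weights from a continuous distribution. Then for any node i and any d ≥ 0, the probability that IB(N(i)) ⊆ N_d(i) is at least 1 − r(r−1)^d/(d+1)!. -/

import Mathlib

/-!
If `IB(N(i))` is not contained in `N_d(i)`, cut a weight-increasing path from `N(i)` to a vertex
outside `N_d(i)` at its last visit to `N(i)`: that vertex and the `d` following ones, preceded by
`i`, form a non-backtracking walk of length `d + 1` from `i` whose last `d + 1` vertices carry
increasing weights. There are at most `r (r - 1)^d` such walks, and for each of them the weights
are increasing with probability at most `1/(d+1)!`, because the `(d+1)!` orderings of `d + 1`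
i.i.d. weights are disjoint events of equal probability. A union bound finishes.
-/

open MeasureTheory
open scoped ENNReal

variable {V : Type*}

/-- The ball `N_d(z)` : nodes at graph distance at most `d` from `z`. -/
def gball (G : SimpleGraph V) (z : V) (d : ℕ) : Set V :=
  {v | ∃ p : G.Walk z v, p.length ≤ d}

/-- There is a weight-increasing path in `G` from (some node of) `Z` to `v`. -/
def IsIncPathFrom (G : SimpleGraph V) (w : V → ℝ) (Z : Set V) (v : V) : Prop :=
  ∃ n : ℕ, ∃ p : Fin (n + 1) → V,
    p 0 ∈ Z ∧ p (Fin.last n) = v ∧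
    (∀ i : Fin n, G.Adj (p i.castSucc) (p i.succ)) ∧ StrictMono (w ∘ p)

/-- The minimal influence blocking subgraph `IB(Z)`. -/
def IB (G : SimpleGraph V) (w : V → ℝ) (Z : Set V) : Set V :=
  {v | IsIncPathFrom G w Z v}

theorem Tuple.perm_eq_of_strictMono_comp {α : Type*} [PartialOrder α] {m : ℕ} {f : Fin m → α}
    {σ τ : Equiv.Perm (Fin m)} (hσ : StrictMono (f ∘ σ)) (hτ : StrictMono (f ∘ τ)) : σ = τ := by
  have hf : Function.Injective f := by
    simpa [Function.comp_assoc] using hσ.injective.comp σ.symm.injective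
  exact Equiv.ext fun j => hf (congrFun (Tuple.unique_monotone hσ.monotone hτ.monotone) j)

theorem measurableSet_strictMono_comp {ι : Type*} [Preorder ι] [Countable ι] (q : ι → V) :
    MeasurableSet {w : V → ℝ | StrictMono (w ∘ q)} := by
  have hset : {w : V → ℝ | StrictMono (w ∘ q)} =
      ⋂ (a) (b) (_ : a < b), {w | w (q a) < w (q b)} := by
    ext w
    simp [StrictMono]
  rw [hset]
  exact .iInter fun a => .iInter fun b => .iInter fun _ =>
    measurableSet_lt (measurable_pi_apply _) (measurable_pi_apply _)

theorem measurePreserving_comp_perm [Fintype V] {α : Type*} [MeasurableSpace α] (ν : Measure α)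
    [SigmaFinite ν] (e : Equiv.Perm V) :
    MeasurePreserving (fun w : V → α => w ∘ e) (Measure.pi fun _ => ν) (Measure.pi fun _ => ν) := by
  convert measurePreserving_piCongrLeft (fun _ : V => ν) e.symm using 1
  ext w v
  simp [MeasurableEquiv.piCongrLeft, Equiv.piCongrLeft_apply]

theorem measure_strictMono_comp_perm [Fintype V] (ν : Measure ℝ) [SigmaFinite ν] {m : ℕ}
    {q : Fin m → V} (hq : Function.Injective q) (σ : Equiv.Perm (Fin m)) :
    Measure.pi (fun _ : V => ν) {w | StrictMono (w ∘ q ∘ σ)} =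
      Measure.pi (fun _ : V => ν) {w | StrictMono (w ∘ q)} := by
  set e := σ.viaEmbedding ⟨q, hq⟩
  have he : ∀ j, e (q j) = q (σ j) := Equiv.Perm.viaEmbedding_apply σ ⟨q, hq⟩
  have hpre : {w : V → ℝ | StrictMono (w ∘ q ∘ σ)} =
      (fun w => w ∘ e) ⁻¹' {w | StrictMono (w ∘ q)} := by
    ext w
    simp only [Set.mem_ofPred_eq, Set.mem_preimage, Function.comp_def, he]
  rw [hpre]
  exact (measurePreserving_comp_perm ν e).measure_preimage
    (measurableSet_strictMono_comp q).nullMeasurableSet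

theorem measure_strictMono_comp_le [Fintype V] (ν : Measure ℝ) [IsProbabilityMeasure ν] {m : ℕ}
    (q : Fin m → V) :
    Measure.pi (fun _ : V => ν) {w | StrictMono (w ∘ q)} ≤ 1 / (m.factorial : ℝ≥0∞) := by
  by_cases hq : Function.Injective q
  swap
  · obtain ⟨a, b, hab, hne⟩ := Function.not_injective_iff.mp hq
    have hempty : {w : V → ℝ | StrictMono (w ∘ q)} = ∅ :=
      Set.eq_empty_of_forall_notMem fun w hw => hne (hw.injective (by simp [hab]))
    simp [hempty]
  set A : Equiv.Perm (Fin m) → Set (V → ℝ) := fun σ => {w | StrictMono (w ∘ q ∘ σ)}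
  have hdisj : Set.Pairwise (Finset.univ : Finset (Equiv.Perm (Fin m)))
      fun σ τ => AEDisjoint (Measure.pi fun _ : V => ν) (A σ) (A τ) := fun σ _ τ _ hne =>
    Disjoint.aedisjoint <| Set.disjoint_left.2 fun w hσ hτ =>
      hne (Tuple.perm_eq_of_strictMono_comp (f := w ∘ q) hσ hτ)
  have hsum : ∑ σ, Measure.pi (fun _ : V => ν) (A σ) ≤ 1 :=
    (sum_measure_le_measure_univ (t := A)
      (fun σ _ => (measurableSet_strictMono_comp (q ∘ σ)).nullMeasurableSet) hdisj).trans_eq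
      measure_univ
  rw [ENNReal.le_div_iff_mul_le (by simp [Nat.factorial_ne_zero]) (by simp), mul_comm]
  simpa [A, measure_strictMono_comp_perm ν hq, Fintype.card_perm] using hsum

section Ball

variable {G : SimpleGraph V} {z u v : V} {m k : ℕ}

theorem self_mem_gball (G : SimpleGraph V) (z : V) (d : ℕ) : z ∈ gball G z d :=
  ⟨.nil, Nat.zero_le d⟩

theorem gball_mono (h : m ≤ k) : gball G z m ⊆ gball G z k :=
  fun _ ⟨p, hp⟩ => ⟨p, hp.trans h⟩

theorem mem_gball_trans (hu : u ∈ gball G z m) (hv : v ∈ gball G u k) : v ∈ gball G z (m + k) := by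
  obtain ⟨p, hp⟩ := hu
  obtain ⟨p', hp'⟩ := hv
  exact ⟨p.append p', by rw [SimpleGraph.Walk.length_append]; omega⟩

theorem mem_gball_one_of_adj (h : G.Adj z v) : v ∈ gball G z 1 :=
  ⟨h.toWalk, le_rfl⟩

theorem adj_of_mem_gball_one (hv : v ∈ gball G z 1) (hne : v ≠ z) : G.Adj z v := by
  obtain ⟨p, hp⟩ := hv
  cases p with
  | nil => exact absurd rfl hne
  | cons h p' =>
    rw [SimpleGraph.Walk.length_cons, add_le_iff_nonpos_left, Nat.le_zero] at hp
    rwa [← SimpleGraph.Walk.eq_of_length_eq_zero hp]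

theorem last_mem_gball_of_chain {n : ℕ} {p : Fin (n + 1) → V}
    (hp : ∀ j : Fin n, G.Adj (p j.castSucc) (p j.succ)) (a : Fin (n + 1)) :
    p (Fin.last n) ∈ gball G (p a) (n - a) := by
  induction a using Fin.reverseInduction with
  | last => simpa using self_mem_gball G (p (Fin.last n)) 0
  | cast j ih =>
    convert mem_gball_trans (mem_gball_one_of_adj (hp j)) ih using 2
    simp only [Fin.val_castSucc, Fin.val_succ]
    omega

end Ball

open Finset in
def nonBacktrackingSeqs [Fintype V] [DecidableEq V] (G : SimpleGraph V) [DecidableRel G.Adj]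
    (u : V) (n : ℕ) : Finset (Fin (n + 2) → V) :=
  {q | q 0 = u ∧ (∀ j : Fin (n + 1), G.Adj (q j.castSucc) (q j.succ)) ∧
    ∀ j : Fin n, q j.castSucc.castSucc ≠ q j.succ.succ}

section Counting

variable [Fintype V] [DecidableEq V] {G : SimpleGraph V} [DecidableRel G.Adj] {r : ℕ}

theorem mem_nonBacktrackingSeqs {u : V} {n : ℕ} {q : Fin (n + 2) → V} :
    q ∈ nonBacktrackingSeqs G u n ↔ q 0 = u ∧ (∀ j : Fin (n + 1), G.Adj (q j.castSucc) (q j.succ)) ∧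
      ∀ j : Fin n, q j.castSucc.castSucc ≠ q j.succ.succ := by
  simp [nonBacktrackingSeqs]

theorem card_nonBacktrackingSeqs_zero_le (hdeg : ∀ v, G.degree v ≤ r) (u : V) :
    (nonBacktrackingSeqs G u 0).card ≤ r := by
  refine (Finset.card_le_card_of_injOn (fun q => q 1) (t := G.neighborFinset u) ?_ ?_).trans
    ((G.card_neighborFinset_eq_degree u).trans_le (hdeg u))
  · intro q hq
    obtain ⟨h0, hadj, -⟩ := mem_nonBacktrackingSeqs.1 hq
    simpa [← h0] using hadj 0
  · intro q hq q' hq' h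
    have h0 := (mem_nonBacktrackingSeqs.1 hq).1.trans (mem_nonBacktrackingSeqs.1 hq').1.symm
    funext j
    fin_cases j
    exacts [h0, h]

theorem init_mem_nonBacktrackingSeqs {u : V} {n : ℕ} {q : Fin (n + 3) → V}
    (hq : q ∈ nonBacktrackingSeqs G u (n + 1)) : Fin.init q ∈ nonBacktrackingSeqs G u n := by
  obtain ⟨h0, hadj, hnb⟩ := mem_nonBacktrackingSeqs.1 hq
  refine mem_nonBacktrackingSeqs.2 ⟨h0, fun j => ?_, fun j => ?_⟩
  · simpa only [Fin.init, Fin.succ_castSucc] using hadj j.castSucc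
  · simpa only [Fin.init, Fin.succ_castSucc] using hnb j.castSucc

theorem card_filter_init_nonBacktrackingSeqs_le (hdeg : ∀ v, G.degree v ≤ r) {u : V} {n : ℕ}
    {q' : Fin (n + 2) → V} (hq' : q' ∈ nonBacktrackingSeqs G u n) :
    ((nonBacktrackingSeqs G u (n + 1)).filter fun q => Fin.init q = q').card ≤ r - 1 := by
  have hprev : q' (Fin.last n).castSucc ∈ G.neighborFinset (q' (Fin.last (n + 1))) := by
    simpa using ((mem_nonBacktrackingSeqs.1 hq').2.1 (Fin.last n)).symm
  refine (Finset.card_le_card_of_injOn (fun q => q (Fin.last (n + 2)))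
    (t := (G.neighborFinset (q' (Fin.last (n + 1)))).erase (q' (Fin.last n).castSucc))
    ?_ ?_).trans ?_
  · intro q hq
    simp only [Finset.coe_filter, Set.mem_ofPred_eq, mem_nonBacktrackingSeqs] at hq
    obtain ⟨⟨-, hadj, hnb⟩, rfl⟩ := hq
    simp only [Finset.coe_erase, Set.mem_sdiff, Finset.mem_coe, SimpleGraph.mem_neighborFinset]
    exact ⟨hadj (Fin.last (n + 1)), (hnb (Fin.last n)).symm⟩
  · intro q hq q₂ hq₂ h
    simp only [Finset.coe_filter, Set.mem_ofPred_eq] at hq hq₂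
    rw [← Fin.snoc_init_self q, ← Fin.snoc_init_self q₂, hq.2, hq₂.2]
    exact congrArg _ h
  · rw [Finset.card_erase_of_mem hprev, G.card_neighborFinset_eq_degree]
    exact Nat.sub_le_sub_right (hdeg _) 1

theorem card_nonBacktrackingSeqs_le (hdeg : ∀ v, G.degree v ≤ r) (u : V) (n : ℕ) :
    (nonBacktrackingSeqs G u n).card ≤ r * (r - 1) ^ n := by
  induction n with
  | zero => simpa using card_nonBacktrackingSeqs_zero_le hdeg u
  | succ n ih =>
    calc (nonBacktrackingSeqs G u (n + 1)).card
        ≤ (r - 1) * (nonBacktrackingSeqs G u n).card :=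
          Finset.card_le_mul_card_image_of_maps_to (fun _ => init_mem_nonBacktrackingSeqs) _
            fun _ hq' => card_filter_init_nonBacktrackingSeqs_le hdeg hq'
      _ ≤ (r - 1) * (r * (r - 1) ^ n) := Nat.mul_le_mul_left _ ih
      _ = r * (r - 1) ^ (n + 1) := by ring

end Counting

section Extraction

variable [Fintype V] [DecidableEq V] {G : SimpleGraph V} [DecidableRel G.Adj] {i : V} {d : ℕ}

theorem cons_mem_nonBacktrackingSeqs {s : Fin (d + 1) → V} (h0 : G.Adj i (s 0))
    (hs : ∀ j : Fin d, G.Adj (s j.castSucc) (s j.succ)) (hinj : Function.Injective s)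
    (hi : ∀ j : Fin d, s j.succ ≠ i) : Fin.cons i s ∈ nonBacktrackingSeqs G i d := by
  refine mem_nonBacktrackingSeqs.2 ⟨rfl, fun j => ?_, fun j => ?_⟩
  · cases j using Fin.cases with
    | zero => simpa using h0
    | succ j => simpa [← Fin.succ_castSucc] using hs j
  · rcases j with ⟨_ | k, hk⟩
    · exact (hi ⟨0, hk⟩).symm
    · exact hinj.ne (by simp [Fin.ext_iff])

theorem exists_mem_nonBacktrackingSeqs_of_not_IB_subset {w : V → ℝ}
    (h : ¬ IB G w (gball G i 1) ⊆ gball G i d) :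
    ∃ q ∈ nonBacktrackingSeqs G i d, StrictMono (w ∘ Fin.tail q) := by
  classical
  obtain ⟨v, ⟨n, p, hp0, rfl, hadj, hmono⟩, hfar⟩ := Set.not_subset.1 h
  obtain ⟨a, ha, hmax⟩ := (Finset.univ.filter fun b => p b ∈ gball G i 1).exists_max_image id
    ⟨0, by simpa using hp0⟩
  simp only [Finset.mem_filter, Finset.mem_univ, true_and, id] at ha hmax
  -- `a` is the last visit of the path to `N(i)`
  have hout : ∀ b, a < b → p b ∉ gball G i 1 := fun b hab hb => (hmax b hb).not_gt hab
  have hlen : a + d ≤ n := by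
    by_contra! hlt
    exact hfar (gball_mono (by omega) (mem_gball_trans ha (last_mem_gball_of_chain hadj a)))
  have hai : G.Adj i (p a) := by
    refine adj_of_mem_gball_one ha fun hpa => ?_
    obtain rfl | hlast := eq_or_ne a (Fin.last n)
    · exact hfar (hpa ▸ self_mem_gball G i d)
    · obtain ⟨a', rfl⟩ := Fin.exists_castSucc_eq.2 hlast
      exact hout a'.succ Fin.castSucc_lt_succ (mem_gball_one_of_adj (hpa ▸ hadj a'))
  set s : Fin (d + 1) → V := fun j => p ⟨a + j, by omega⟩
  have hs : StrictMono (w ∘ s) := fun x y hxy => hmono (Fin.mk_lt_mk.2 (Nat.add_lt_add_left hxy _))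
  refine ⟨Fin.cons i s, cons_mem_nonBacktrackingSeqs hai (fun j => hadj ⟨a + j, by omega⟩)
    hs.injective.of_comp fun j hj => hout ⟨a + j.succ, by omega⟩ ?_ ?_, by simpa using hs⟩
  · exact Fin.mk_lt_mk.2 (by simp)
  · rw [show p _ = i from hj]
    exact self_mem_gball G i 1

end Extraction

theorem IB_ball_probability_nodes_general [Fintype V] (G : SimpleGraph V) [DecidableRel G.Adj]
    (r : ℕ) (hdeg : ∀ v, G.degree v ≤ r) (i : V) (d : ℕ)
    (ν : Measure ℝ) [IsProbabilityMeasure ν] :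
    1 - ((r * (r - 1) ^ d : ℕ) : ℝ≥0∞) / ((Nat.factorial (d + 1) : ℕ) : ℝ≥0∞) ≤
      (Measure.pi fun _ : V => ν) {w : V → ℝ | IB G w (gball G i 1) ⊆ gball G i d} := by
  classical
  set μ := Measure.pi fun _ : V => ν
  set S := {w : V → ℝ | IB G w (gball G i 1) ⊆ gball G i d}
  have hbad : Sᶜ ⊆ ⋃ q ∈ nonBacktrackingSeqs G i d, {w | StrictMono (w ∘ Fin.tail q)} :=
    fun w hw => by simpa using exists_mem_nonBacktrackingSeqs_of_not_IB_subset hw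
  have hSc : μ Sᶜ ≤ ((r * (r - 1) ^ d : ℕ) : ℝ≥0∞) / ((Nat.factorial (d + 1) : ℕ) : ℝ≥0∞) := calc
    μ Sᶜ ≤ ∑ q ∈ nonBacktrackingSeqs G i d, μ {w | StrictMono (w ∘ Fin.tail q)} :=
      (measure_mono hbad).trans (measure_biUnion_finset_le _ _)
    _ ≤ (nonBacktrackingSeqs G i d).card • (1 / ((d + 1).factorial : ℝ≥0∞)) :=
      Finset.sum_le_card_nsmul _ _ _ fun q _ => measure_strictMono_comp_le ν _
    _ ≤ _ := by
      rw [nsmul_eq_mul, mul_one_div]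
      gcongr
      exact_mod_cast card_nonBacktrackingSeqs_le hdeg i d
  calc 1 - _ ≤ 1 - μ Sᶜ := tsub_le_tsub_left hSc 1
    _ ≤ μ S := tsub_le_iff_right.2 (measure_univ.symm.le.trans (measure_univ_le_add_compl S))

/-- For a graph of maximum degree `r ≥ 3` with i.i.d. continuous node weights, for any node
`i` and any `d ≥ 0`, `P(IB(N(i)) ⊆ N_d(i)) ≥ 1 − r(r−1)^d/(d+1)!`. -/
theorem IB_ball_probability_nodes [Fintype V] (G : SimpleGraph V) [DecidableRel G.Adj]
    (r : ℕ) (hr : 3 ≤ r) (hdeg : ∀ v, G.degree v ≤ r) (i : V) (d : ℕ)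
    (ν : Measure ℝ) [IsProbabilityMeasure ν] [NullSingletonClass ν] :
    1 - ((r * (r - 1) ^ d : ℕ) : ℝ≥0∞) / ((Nat.factorial (d + 1) : ℕ) : ℝ≥0∞) ≤
      (Measure.pi fun _ : V => ν) {w : V → ℝ | IB G w (gball G i 1) ⊆ gball G i d} :=
  IB_ball_probability_nodes_general G r hdeg i d ν
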